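/- For n > 5, the closed sun graph S̄_n has harmonious chromatic number n + h(C_n), where h(C_n) is the harmonious chromatic number of the cycle C_n. -/
import Mathlib


/-- A coloring `c` is harmonious for `G` if it is a proper vertex coloring and
every unordered pair of colors appears on the endpoints of at most one edge. -/
def IsHarmonious {V α : Type*} (G : SimpleGraph V) (c : V → α) : Prop :=
  (∀ ⦃u v : V⦄, G.Adj u v → c u ≠ c v) ∧
  ∀ e ∈ G.edgeSet, ∀ e' ∈ G.edgeSet, Sym2.map c e = Sym2.map c e' → e = e'

/-- The harmonious chromatic number: the least `k` such that `G` admits a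
harmonious coloring with `k` colors. -/
noncomputable def harmoniousChromaticNumber {V : Type*} [Fintype V] (G : SimpleGraph V) : ℕ :=
  sInf {k | ∃ c : V → Fin k, IsHarmonious G c}


/-- The closed sun graph `S̄_n`: a complete graph on the vertices `inl i`
together with outer cycle vertices `inr i`, where `u_i` is adjacent to `v_i`,
`v_{i+1}` and to `u_{i+1}` (indices mod `n`). -/
def closedSunGraph (n : ℕ) : SimpleGraph (Fin n ⊕ Fin n) :=
  SimpleGraph.fromRel (fun x y =>
    match x, y with
    | .inl i, .inl j => i ≠ j
    | .inr i, .inl j => j = i ∨ j.val = (i.val + 1) % n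
    | .inr i, .inr j => j.val = (i.val + 1) % n
    | _, _ => False)

/-- The cycle graph `C_n`. -/
def cycleGraph' (n : ℕ) : SimpleGraph (Fin n) :=
  SimpleGraph.fromRel (fun i j => j.val = (i.val + 1) % n)

lemma isHarmonious_iff' {V α : Type*} (G : SimpleGraph V) (c : V → α) :
    IsHarmonious G c ↔ (∀ ⦃u v⦄, G.Adj u v → c u ≠ c v) ∧
      ∀ u v u' v' : V, G.Adj u v → G.Adj u' v' →
        s(c u, c v) = s(c u', c v') → s(u, v) = s(u', v') := by
  constructor
  · rintro ⟨h1, h2⟩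
    refine ⟨h1, fun u v u' v' h h' he => ?_⟩
    exact h2 _ (G.mem_edgeSet.2 h) _ (G.mem_edgeSet.2 h') (by simpa using he)
  · rintro ⟨h1, h2⟩
    refine ⟨h1, ?_⟩
    intro e he e' he' hm
    induction e using Sym2.ind with | _ u v =>
    induction e' using Sym2.ind with | _ u' v' =>
    exact h2 u v u' v' he he' (by simpa using hm)

lemma cycle_adj {n : ℕ} {i j : Fin n} :
    (cycleGraph' n).Adj i j ↔ i ≠ j ∧ (j.val = (i.val + 1) % n ∨ i.val = (j.val + 1) % n) := by
  simp [cycleGraph', SimpleGraph.fromRel_adj]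

lemma sun_adj_ll {n : ℕ} {i j : Fin n} :
    (closedSunGraph n).Adj (.inl i) (.inl j) ↔ i ≠ j := by
  constructor
  · rintro ⟨h, _⟩; simpa [Sum.inl.injEq] using h
  · intro h; exact ⟨by simpa using h, Or.inl h⟩

lemma sun_adj_rr {n : ℕ} {i j : Fin n} :
    (closedSunGraph n).Adj (.inr i) (.inr j) ↔ (cycleGraph' n).Adj i j := by
  rw [cycle_adj]
  constructor
  · rintro ⟨h, h2⟩; exact ⟨by simpa using h, h2⟩
  · rintro ⟨h, h2⟩; exact ⟨by simpa using h, h2⟩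

lemma sun_adj_rl {n : ℕ} {i j : Fin n} :
    (closedSunGraph n).Adj (.inr i) (.inl j) ↔ j = i ∨ j.val = (i.val + 1) % n := by
  constructor
  · rintro ⟨h, h2⟩
    rcases h2 with h2 | h2
    · exact h2
    · exact h2.elim
  · intro h; exact ⟨by simp, Or.inl h⟩

lemma sun_adj_lr {n : ℕ} {i j : Fin n} :
    (closedSunGraph n).Adj (.inl j) (.inr i) ↔ j = i ∨ j.val = (i.val + 1) % n := by
  rw [SimpleGraph.adj_comm]; exact sun_adj_rl

lemma mod_succ_inj {n a b : ℕ} (ha : a < n) (hb : b < n) (h : (a + 1) % n = (b + 1) % n) :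
    a = b := by
  rcases Nat.lt_or_ge (a + 1) n with h1 | h1 <;> rcases Nat.lt_or_ge (b + 1) n with h2 | h2
  · rw [Nat.mod_eq_of_lt h1, Nat.mod_eq_of_lt h2] at h; omega
  · have hb' : b + 1 = n := by omega
    rw [Nat.mod_eq_of_lt h1, hb', Nat.mod_self] at h; omega
  · have ha' : a + 1 = n := by omega
    rw [ha', Nat.mod_self, Nat.mod_eq_of_lt h2] at h; omega
  · omega

lemma cast_ne_natAdd {n k : ℕ} (i : Fin n) (x : Fin k) :
    (Fin.castAdd k i : Fin (n + k)) ≠ Fin.natAdd n x := by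
  intro h
  have h2 : (i : ℕ) = n + x := congrArg Fin.val h
  have := i.isLt
  omega

/-- The combined coloring is harmonious. -/
lemma sun_coloring_harmonious {n k : ℕ} (d0 : Fin n → Fin k)
    (hd : IsHarmonious (cycleGraph' n) d0) :
    IsHarmonious (closedSunGraph n)
      (Sum.elim (fun i => Fin.castAdd k i) (fun i => Fin.natAdd n (d0 i))) := by
  rw [isHarmonious_iff'] at hd ⊢
  obtain ⟨hdp, hdh⟩ := hd
  set c0 : Fin n ⊕ Fin n → Fin (n + k) :=
    Sum.elim (fun i => Fin.castAdd k i) (fun i => Fin.natAdd n (d0 i)) with hc0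
  have hlh : ∀ (i : Fin n) (x : Fin k), (Fin.castAdd k i : Fin (n+k)) ≠ Fin.natAdd n x :=
    fun i x => cast_ne_natAdd i x
  have hcastinj : ∀ {a b : Fin n}, (Fin.castAdd k a : Fin (n+k)) = Fin.castAdd k b → a = b := by
    intro a b h
    simpa [Fin.ext_iff] using h
  have hnatinj : ∀ {a b : Fin k}, (Fin.natAdd n a : Fin (n+k)) = Fin.natAdd n b → a = b := by
    intro a b h
    simp only [Fin.ext_iff, Fin.coe_natAdd] at h
    exact Fin.ext (by omega)
  -- key mixed lemma
  have mixed : ∀ {i j i' j' : Fin n}, (j = i ∨ j.val = (i.val + 1) % n) →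
      (j' = i' ∨ j'.val = (i'.val + 1) % n) → j = j' → d0 i = d0 i' → i = i' := by
    intro i j i' j' h h' hj hd
    subst hj
    by_contra hne
    rcases h with h | h <;> rcases h' with h' | h'
    · exact hne (h ▸ h')
    · subst h
      exact hdp (cycle_adj.2 ⟨fun e => hne e.symm, Or.inl h'⟩) hd.symm
    · subst h'
      exact hdp (cycle_adj.2 ⟨hne, Or.inl h⟩) hd
    · exact hne (Fin.ext (mod_succ_inj i.isLt i'.isLt (h ▸ h')))
  constructor
  · intro u v huv
    rcases u with i | i <;> rcases v with j | j
    · rw [sun_adj_ll] at huv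
      simp only [hc0, Sum.elim_inl]
      exact fun e => huv (hcastinj e)
    · exact hlh _ _
    · exact (hlh _ _).symm
    · rw [sun_adj_rr] at huv
      simp only [hc0, Sum.elim_inr]
      exact fun e => hdp huv (hnatinj e)
  · intro u v u' v' h h' he
    have imp1 : ∀ {a : Fin n} {b : Fin k}, (Fin.castAdd k a : Fin (n+k)) = Fin.natAdd n b → False :=
      fun {a b} h => cast_ne_natAdd a b h
    have imp2 : ∀ {b : Fin k} {a : Fin n}, (Fin.natAdd n b : Fin (n+k)) = Fin.castAdd k a → False :=
      fun {b a} h => cast_ne_natAdd a b h.symm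
    rcases u with i | i <;> rcases v with j | j <;> rcases u' with i' | i' <;> rcases v' with j' | j' <;>
      simp only [hc0, Sum.elim_inl, Sum.elim_inr] at he <;>
      rw [Sym2.eq_iff] at he
    -- ll vs ll
    · rcases he with ⟨h1, h2⟩ | ⟨h1, h2⟩
      · obtain rfl := hcastinj h1; obtain rfl := hcastinj h2; rfl
      · obtain rfl := hcastinj h1; obtain rfl := hcastinj h2; exact Sym2.eq_swap
    -- ll vs lr
    · rcases he with ⟨h1, h2⟩ | ⟨h1, h2⟩ <;>
        first | exact (imp1 h1).elim | exact (imp2 h1).elim | exact (imp1 h2).elim | exact (imp2 h2).elim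
    -- ll vs rl
    · rcases he with ⟨h1, h2⟩ | ⟨h1, h2⟩ <;>
        first | exact (imp1 h1).elim | exact (imp2 h1).elim | exact (imp1 h2).elim | exact (imp2 h2).elim
    -- ll vs rr
    · rcases he with ⟨h1, h2⟩ | ⟨h1, h2⟩ <;>
        first | exact (imp1 h1).elim | exact (imp2 h1).elim | exact (imp1 h2).elim | exact (imp2 h2).elim
    -- lr vs ll
    · rcases he with ⟨h1, h2⟩ | ⟨h1, h2⟩ <;>
        first | exact (imp1 h1).elim | exact (imp2 h1).elim | exact (imp1 h2).elim | exact (imp2 h2).elim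
    -- lr vs lr
    · rw [sun_adj_lr] at h h'
      rcases he with ⟨h1, h2⟩ | ⟨h1, h2⟩
      · obtain rfl := hcastinj h1
        obtain rfl := mixed h h' rfl (hnatinj h2)
        rfl
      · exact (imp1 h1).elim
    -- lr vs rl
    · rw [sun_adj_lr] at h; rw [sun_adj_rl] at h'
      rcases he with ⟨h1, h2⟩ | ⟨h1, h2⟩
      · exact (imp1 h1).elim
      · obtain rfl := hcastinj h1
        obtain rfl := mixed h h' rfl (hnatinj h2)
        exact Sym2.eq_swap
    -- lr vs rr
    · rcases he with ⟨h1, h2⟩ | ⟨h1, h2⟩ <;>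
        first | exact (imp1 h1).elim | exact (imp2 h1).elim | exact (imp1 h2).elim | exact (imp2 h2).elim
    -- rl vs ll
    · rcases he with ⟨h1, h2⟩ | ⟨h1, h2⟩ <;>
        first | exact (imp1 h1).elim | exact (imp2 h1).elim | exact (imp1 h2).elim | exact (imp2 h2).elim
    -- rl vs lr
    · rw [sun_adj_rl] at h; rw [sun_adj_lr] at h'
      rcases he with ⟨h1, h2⟩ | ⟨h1, h2⟩
      · exact (imp2 h1).elim
      · obtain rfl := hcastinj h2
        obtain rfl := mixed h h' rfl (hnatinj h1)
        exact Sym2.eq_swap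
    -- rl vs rl
    · rw [sun_adj_rl] at h h'
      rcases he with ⟨h1, h2⟩ | ⟨h1, h2⟩
      · obtain rfl := hcastinj h2
        obtain rfl := mixed h h' rfl (hnatinj h1)
        rfl
      · exact (imp2 h1).elim
    -- rl vs rr
    · rcases he with ⟨h1, h2⟩ | ⟨h1, h2⟩ <;>
        first | exact (imp1 h1).elim | exact (imp2 h1).elim | exact (imp1 h2).elim | exact (imp2 h2).elim
    -- rr vs ll
    · rcases he with ⟨h1, h2⟩ | ⟨h1, h2⟩ <;>
        first | exact (imp1 h1).elim | exact (imp2 h1).elim | exact (imp1 h2).elim | exact (imp2 h2).elim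
    -- rr vs lr
    · rcases he with ⟨h1, h2⟩ | ⟨h1, h2⟩ <;>
        first | exact (imp1 h1).elim | exact (imp2 h1).elim | exact (imp1 h2).elim | exact (imp2 h2).elim
    -- rr vs rl
    · rcases he with ⟨h1, h2⟩ | ⟨h1, h2⟩ <;>
        first | exact (imp1 h1).elim | exact (imp2 h1).elim | exact (imp1 h2).elim | exact (imp2 h2).elim
    -- rr vs rr
    · rw [sun_adj_rr] at h h'
      have key := hdh i j i' j' h h'
      have hs : s(d0 i, d0 j) = s(d0 i', d0 j') := by
        rcases he with ⟨h1, h2⟩ | ⟨h1, h2⟩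
        · rw [hnatinj h1, hnatinj h2]
        · rw [hnatinj h1, hnatinj h2]; exact Sym2.eq_swap
      have := key hs
      rw [Sym2.eq_iff] at this
      rcases this with ⟨rfl, rfl⟩ | ⟨rfl, rfl⟩
      · rfl
      · exact Sym2.eq_swap

/-- Identity coloring of the cycle is harmonious, so the set is nonempty. -/
lemma cycle_set_nonempty (n : ℕ) :
    {k | ∃ c : Fin n → Fin k, IsHarmonious (cycleGraph' n) c}.Nonempty := by
  refine ⟨n, id, ?_, ?_⟩
  · intro u v h
    exact h.ne
  · intro e he e' he' hm
    simpa using hm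

lemma sun_lower {n k : ℕ} (hn : 2 < n) (c : Fin n ⊕ Fin n → Fin k)
    (hc : IsHarmonious (closedSunGraph n) c) :
    n + sInf {m | ∃ d : Fin n → Fin m, IsHarmonious (cycleGraph' n) d} ≤ k := by
  rw [isHarmonious_iff'] at hc
  obtain ⟨hp, hh⟩ := hc
  have cinj : Function.Injective (fun i : Fin n => c (.inl i)) := by
    intro a b h
    by_contra hne
    exact hp (sun_adj_ll.2 hne) h
  set S : Finset (Fin k) := Finset.image (fun i : Fin n => c (.inl i)) Finset.univ with hS
  have hScard : S.card = n := by
    rw [hS, Finset.card_image_of_injective _ cinj, Finset.card_univ, Fintype.card_fin]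
  have hk : n ≤ k := by
    have := Finset.card_le_univ S
    rw [hScard] at this
    simpa using this
  -- inr colors avoid S
  have hdis : ∀ i : Fin n, c (.inr i) ∈ Sᶜ := by
    intro i
    rw [Finset.mem_compl, hS, Finset.mem_image]
    rintro ⟨j, -, hj⟩
    -- c (inl j) = c (inr i)
    have hji : j ≠ i := by
      rintro rfl
      exact hp (sun_adj_rl.2 (Or.inl rfl)) hj.symm
    have hji2 : (j : ℕ) ≠ (i.val + 1) % n := by
      intro h
      exact hp (sun_adj_rl.2 (Or.inr h)) hj.symm
    have adj1 : (closedSunGraph n).Adj (.inl j) (.inl i) := sun_adj_ll.2 hji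
    have adj2 : (closedSunGraph n).Adj (.inr i) (.inl i) := sun_adj_rl.2 (Or.inl rfl)
    have hpair : s(c (.inl j), c (.inl i)) = s(c (.inr i), c (.inl i)) := by rw [hj]
    have := hh _ _ _ _ adj1 adj2 hpair
    rw [Sym2.eq_iff] at this
    rcases this with ⟨h1, h2⟩ | ⟨h1, h2⟩
    · exact Sum.inl_ne_inr h1
    · exact Sum.inl_ne_inr h2
  have hCcard : (Sᶜ : Finset (Fin k)).card = k - n := by
    rw [Finset.card_compl, hScard, Fintype.card_fin]
  let e := Sᶜ.equivFinOfCardEq hCcard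
  set d : Fin n → Fin (k - n) := fun i => e ⟨c (.inr i), hdis i⟩ with hd
  have dinj : ∀ {a b : Fin n}, d a = d b → c (.inr a) = c (.inr b) := by
    intro a b h
    have := e.injective h
    exact congrArg Subtype.val this
  have hdharm : IsHarmonious (cycleGraph' n) d := by
    rw [isHarmonious_iff']
    constructor
    · intro u v h heq
      exact hp (sun_adj_rr.2 h) (dinj heq)
    · intro u v u' v' h h' heq
      rw [Sym2.eq_iff] at heq
      have hs : s(c (.inr u), c (.inr v)) = s(c (.inr u'), c (.inr v')) := by
        rcases heq with ⟨h1, h2⟩ | ⟨h1, h2⟩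
        · rw [dinj h1, dinj h2]
        · rw [dinj h1, dinj h2]; exact Sym2.eq_swap
      have := hh _ _ _ _ (sun_adj_rr.2 h) (sun_adj_rr.2 h') hs
      rw [Sym2.eq_iff] at this
      rcases this with ⟨h1, h2⟩ | ⟨h1, h2⟩
      · rw [Sum.inr.injEq] at h1 h2; rw [h1, h2]
      · rw [Sum.inr.injEq] at h1 h2; rw [h1, h2]; exact Sym2.eq_swap
  have hle : sInf {m | ∃ d : Fin n → Fin m, IsHarmonious (cycleGraph' n) d} ≤ k - n :=
    Nat.sInf_le ⟨d, hdharm⟩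
  omega

theorem harmonious_closedSunGraph (n : ℕ) (hn : 5 < n) :
    harmoniousChromaticNumber (closedSunGraph n) =
      n + harmoniousChromaticNumber (cycleGraph' n) := by
  have hn2 : 2 < n := by omega
  set hC := harmoniousChromaticNumber (cycleGraph' n) with hhC
  obtain ⟨d0, hd0⟩ : ∃ d0 : Fin n → Fin hC, IsHarmonious (cycleGraph' n) d0 := by
    have := Nat.sInf_mem (cycle_set_nonempty n)
    exact this
  have hup : harmoniousChromaticNumber (closedSunGraph n) ≤ n + hC :=
    Nat.sInf_le ⟨_, sun_coloring_harmonious d0 hd0⟩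
  have hlow : n + hC ≤ harmoniousChromaticNumber (closedSunGraph n) := by
    refine le_csInf ⟨n + hC, _, sun_coloring_harmonious d0 hd0⟩ ?_
    rintro k ⟨c, hc⟩
    exact sun_lower hn2 c hc
  omega
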